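/- For all n > 0 and every lattice path P ∈ R(Nⁿ Eⁿ) in the n×n square, mkwd(φ_LW(P)) = sw⁻_{1,-1}(mkwd(P)). -/

import Mathlib

/-!
Give the letters of a word their `(1,-1)`-levels. The letters at level `k` are the `N`s arriving
at `k` from below and the `E`s arriving at `k` from above, while `σ⁽ᵏ⁾` records the `N`s arriving
at `k` from below (as `N`) and the `N`s leaving `k` upwards (as `E`). Each `E` arriving from above
closes the excursion opened by the last `N` leaving `k`, so the two words agree up to one `E` in
front when the path starts above `k` and one `E` at the end when it ends above `k`. For a path
from level `0` to level `0` this makes `τ⁽ᵏ⁾` the reversal of the letters at level `k`, which is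
what the negative sweep reads there, since a stable sort by level concatenates the level classes
in sweep order.
-/

inductive Letter : Type
  | N : Letter
  | E : Letter
deriving DecidableEq, Repr

/-- weight of a letter: `N` has weight `r`, `E` has weight `s`. -/
def wt (r s : ℤ) : Letter → ℤ
  | Letter.N => r
  | Letter.E => s

/-- Pair each letter of the word with its `(r,s)`-level (east-north convention),
    starting from level `l`.  With `l = 0`, the `i`-th letter `wᵢ` is paired with
    `lᵢ = l_{i-1} + wt wᵢ`. -/
def lvls (r s : ℤ) : ℤ → List Letter → List (Letter × ℤ)
  | _, [] => []
  | l, c :: w => (c, l + wt r s c) :: lvls r s (l + wt r s c) w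

/-- `negBefore k k' = true` iff level `k` is swept before (or equals) level `k'`
    in the negative sweep order `-1, -2, -3, …` then `…, 3, 2, 1, 0`. -/
def negBefore (k k' : ℤ) : Bool :=
  if k < 0 then (if k' < 0 then decide (k' ≤ k) else true)
  else (if k' < 0 then false else decide (k' ≤ k))

/-- `posBefore k k' = true` iff level `k` is swept before (or equals) level `k'`
    in the positive sweep order `0, -1, -2, …` then `…, 3, 2, 1`. -/
def posBefore (k k' : ℤ) : Bool :=
  if k ≤ 0 then (if k' ≤ 0 then decide (k' ≤ k) else true)
  else (if k' ≤ 0 then false else decide (k' ≤ k))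

/-- The negative sweep map `sw⁻_{r,s}`: levels are visited in the order
    `-1, -2, …` then `…, 2, 1, 0`, and each level is scanned right-to-left;
    implemented as a stable sort of the reversed word by the level order. -/
def sweepNeg (r s : ℤ) (w : List Letter) : List Letter :=
  (((lvls r s 0 w).reverse).mergeSort (fun p q => negBefore p.2 q.2)).map Prod.fst

/-- The positive sweep map `sw⁺_{r,s}`: levels are visited in the order
    `0, -1, -2, …` then `…, 3, 2, 1`, and each level is scanned left-to-right;
    implemented as a stable sort of the word by the level order. -/
def sweepPos (r s : ℤ) (w : List Letter) : List Letter :=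
  ((lvls r s 0 w).mergeSort (fun p q => posBefore p.2 q.2)).map Prod.fst

/-- The transposition map `flip`, interchanging `N` and `E`. -/
def flipL : Letter → Letter
  | Letter.N => Letter.E
  | Letter.E => Letter.N

/-- A word is an `(r,s)`-Dyck word iff all of its levels `lᵢ` (`i ≥ 1`) are nonnegative. -/
def IsDyckWord (r s : ℤ) (w : List Letter) : Prop :=
  ∀ p ∈ lvls r s 0 w, 0 ≤ p.2

/-- The area vector `g(P) = (g₀, …, g_{n-1})` of a path in the `n×n` square:
    `gᵢ = i - xᵢ`, where `xᵢ` is the number of east steps before the `(i+1)`-th north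
    step; equivalently, `gᵢ + n - i` is the number of complete lattice squares in the
    strip `i ≤ y ≤ i+1` lying right of the path and left of `x = n`. -/
def areaVecSq (w : List Letter) : List ℤ :=
  (List.range w.length).filterMap fun p =>
    if w[p]? = some Letter.N then
      some (((w.take p).count Letter.N : ℤ) - ((w.take p).count Letter.E : ℤ))
    else none

/-- `σ⁽ⁱ⁾`: the subword `z⁽ⁱ⁾` of the area vector consisting of entries equal to
    `i` or `i-1`, with each `i` replaced by `E` and each `i-1` replaced by `N`. -/
def sigmaLW (g : List ℤ) (i : ℤ) : List Letter :=
  (g.filter (fun x => decide (x = i ∨ x = i - 1))).map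
    (fun x => if x = i then Letter.E else Letter.N)

/-- `τ⁽ⁱ⁾`: for `i ≥ 0`, the reversal of `σ⁽ⁱ⁾`; for `i < 0` with `σ⁽ⁱ⁾` nonempty,
    writing `σ⁽ⁱ⁾ = σ̃⁽ⁱ⁾·E`, it is `rev(σ̃⁽ⁱ⁾)·E`. -/
def tauLW (g : List ℤ) (i : ℤ) : List Letter :=
  if 0 ≤ i then (sigmaLW g i).reverse
  else if sigmaLW g i = [] then []
  else ((sigmaLW g i).dropLast).reverse ++ [Letter.E]

/-- The Loehr–Warrington map `φ_LW` (as a word):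
    the concatenation `τ⁽⁻¹⁾ τ⁽⁻²⁾ ⋯ τ⁽⁻ⁿ⁾ τ⁽ⁿ⁾ ⋯ τ⁽²⁾ τ⁽¹⁾ τ⁽⁰⁾`. -/
def phiLW (n : ℕ) (w : List Letter) : List Letter :=
  let g := areaVecSq w
  ((List.range n).map (fun j => tauLW g (-((j : ℤ) + 1)))).flatten ++
    ((List.range (n + 1)).map (fun j => tauLW g ((n : ℤ) - (j : ℤ)))).flatten

namespace List

variable {α β : Type*}

theorem Pairwise.filter_append_filter_not {R : α → α → Prop} {p : α → Bool} {l : List α}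
    (hl : l.Pairwise R) (hp : ∀ a ∈ l, ∀ b ∈ l, p b → ¬ p a → ¬ R a b) :
    l.filter p ++ l.filter (fun a => !p a) = l := by
  induction l with
  | nil => rfl
  | cons a l ih =>
    obtain ⟨ha, hl⟩ := pairwise_cons.mp hl
    have ih := ih hl fun x hx y hy => hp x (mem_cons_of_mem a hx) y (mem_cons_of_mem a hy)
    by_cases hpa : p a
    · simp [hpa, ih]
    · have hnp : ∀ b ∈ l, ¬ p b := fun b hb hpb =>
        hp a mem_cons_self b (mem_cons_of_mem a hb) hpb hpa (ha b hb)
      rw [filter_cons_of_neg hpa, filter_cons_of_pos (by simpa using hpa),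
        filter_eq_nil_iff.mpr hnp, filter_eq_self.mpr (by simpa using hnp), nil_append]

variable [DecidableEq β] {le : β → β → Bool} {f : α → β}

theorem Pairwise.eq_flatMap_filter {l : List α} (hl : l.Pairwise fun a b => le (f a) (f b))
    (hrefl : ∀ k, le k k) {keys : List β} (hkeys : keys.Pairwise fun j k => ¬ le k j)
    (hmem : ∀ a ∈ l, f a ∈ keys) :
    l = keys.flatMap fun k => l.filter (f · = k) := by
  induction keys generalizing l with
  | nil => simpa [eq_nil_iff_forall_not_mem] using hmem
  | cons k keys ih =>
    obtain ⟨hk, hkeys⟩ := pairwise_cons.mp hkeys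
    have hsplit := hl.filter_append_filter_not (p := (f · = k)) fun a ha b _ hb hna => by
      have := (mem_cons.mp (hmem a ha)).resolve_left (by simpa using hna)
      simpa [of_decide_eq_true hb] using hk _ this
    have ih := ih (l := l.filter fun a => !(f a = k)) (hl.sublist filter_sublist) hkeys
      fun a ha => by
        obtain ⟨ha, hne⟩ := mem_filter.mp ha
        exact (mem_cons.mp (hmem a ha)).resolve_left (by simpa using hne)
    rw [flatMap_cons]
    conv_lhs => rw [← hsplit, ih]
    congr 1
    refine flatMap_congr fun j hj => ?_
    have hjk : j ≠ k := fun h => hk j hj (h ▸ hrefl k)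
    rw [filter_filter]
    exact filter_congr fun a _ => by by_cases h : f a = j <;> simp [h, hjk]

theorem filter_mergeSort_eq_filter (trans : ∀ a b c, le a b → le b c → le a c)
    (total : ∀ a b, le a b || le b a) (l : List α) (k : β) :
    (l.mergeSort fun a b => le (f a) (f b)).filter (f · = k) = l.filter (f · = k) := by
  have hsorted : (l.filter (f · = k)).Pairwise fun a b => le (f a) (f b) :=
    pairwise_of_forall_mem_list fun a ha b hb => by
      simp only [of_decide_eq_true (mem_filter.mp ha).2, of_decide_eq_true (mem_filter.mp hb).2]
      simpa using total k k
  have hsub := (sublist_mergeSort (fun a b c => trans (f a) (f b) (f c))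
    (fun a b => total (f a) (f b)) hsorted filter_sublist).filter (f · = k)
  rw [filter_filter, filter_congr (q := (f · = k)) (by simp)] at hsub
  exact (hsub.eq_of_length ((mergeSort_perm l _).filter _).length_eq.symm).symm

theorem mergeSort_eq_flatMap_filter (trans : ∀ a b c, le a b → le b c → le a c)
    (total : ∀ a b, le a b || le b a) {l : List α} {keys : List β}
    (hkeys : keys.Pairwise fun j k => ¬ le k j) (hmem : ∀ a ∈ l, f a ∈ keys) :
    l.mergeSort (fun a b => le (f a) (f b)) = keys.flatMap fun k => l.filter (f · = k) := by
  have hrefl : ∀ k, le k k := fun k => by simpa using total k k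
  have hsorted := pairwise_mergeSort (le := fun a b => le (f a) (f b))
    (fun a b c => trans (f a) (f b) (f c)) (fun a b => total (f a) (f b)) l
  rw [hsorted.eq_flatMap_filter hrefl hkeys fun a ha => hmem a (mem_mergeSort.mp ha)]
  exact flatMap_congr fun k _ => filter_mergeSort_eq_filter trans total l k

end List

theorem lvls_append (r s a : ℤ) (u v : List Letter) :
    lvls r s a (u ++ v) = lvls r s a u ++ lvls r s (a + (u.map (wt r s)).sum) v := by
  induction u generalizing a with
  | nil => simp [lvls]
  | cons c u ih => simp [lvls, ih, add_assoc]

section Levels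

open Letter

def height (w : List Letter) : ℤ := (w.count N : ℤ) - (w.count E : ℤ)

def levelLetters (w : List Letter) (k : ℤ) : List Letter :=
  ((lvls 1 (-1) 0 w).filter (·.2 = k)).map Prod.fst

def eIfBelow (k l : ℤ) : List Letter := if k < l then [E] else []

theorem sum_map_wt_eq_height (w : List Letter) : (w.map (wt 1 (-1))).sum = height w := by
  induction w with
  | nil => simp [height]
  | cons c w ih => cases c <;> simp [wt, height, ih] <;> ring

theorem height_append_singleton (w : List Letter) (c : Letter) :
    height (w ++ [c]) = height w + wt 1 (-1) c := by
  cases c <;> simp [height, wt] <;> ring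

theorem lvls_append_singleton (w : List Letter) (c : Letter) :
    lvls 1 (-1) 0 (w ++ [c]) = lvls 1 (-1) 0 w ++ [(c, height w + wt 1 (-1) c)] := by
  simp [lvls_append, lvls, sum_map_wt_eq_height]

theorem levelLetters_append_singleton (w : List Letter) (c : Letter) (k : ℤ) :
    levelLetters (w ++ [c]) k =
      levelLetters w k ++ if height w + wt 1 (-1) c = k then [c] else [] := by
  by_cases h : height w + wt 1 (-1) c = k <;> simp [levelLetters, lvls_append_singleton, h]

theorem areaVecSq_append_singleton (w : List Letter) (c : Letter) :
    areaVecSq (w ++ [c]) = areaVecSq w ++ if c = N then [height w] else [] := by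
  rw [areaVecSq, areaVecSq, List.length_append, List.length_singleton, List.range_succ,
    List.filterMap_append]
  congr 1
  · refine List.filterMap_congr fun p hp => ?_
    rw [List.mem_range] at hp
    rw [List.getElem?_append_left hp, List.take_append_of_le_length hp.le]
  · cases c <;> simp [height]

theorem sigmaLW_append_singleton (g : List ℤ) (x i : ℤ) :
    sigmaLW (g ++ [x]) i =
      sigmaLW g i ++ if x = i then [E] else if x = i - 1 then [N] else [] := by
  by_cases h₁ : x = i
  · simp [sigmaLW, h₁]
  · by_cases h₂ : x = i - 1 <;> simp [sigmaLW, h₁, h₂]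

theorem levelLetters_append_eIfBelow (w : List Letter) (k : ℤ) :
    levelLetters w k ++ eIfBelow k (height w) = eIfBelow k 0 ++ sigmaLW (areaVecSq w) k := by
  induction w using List.reverseRecOn with
  | nil => simp [levelLetters, lvls, height, areaVecSq, sigmaLW]
  | append_singleton w c ih =>
    rw [levelLetters_append_singleton, height_append_singleton, areaVecSq_append_singleton]
    cases c with
    | N =>
      rw [if_pos rfl, sigmaLW_append_singleton]
      simp only [wt]
      rcases lt_trichotomy k (height w) with h | h | h
      · have h1 : height w + 1 ≠ k := by omega
        have h2 : height w ≠ k := by omega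
        have h3 : height w ≠ k - 1 := by omega
        simp_all [eIfBelow, show k < height w + 1 by omega]
      · subst h
        simp_all [eIfBelow]
      · rcases (Int.add_one_le_of_lt h).eq_or_lt with rfl | h'
        · simp_all [eIfBelow]
        · have h1 : height w + 1 ≠ k := h'.ne
          have h2 : height w ≠ k := h.ne
          have h3 : height w ≠ k - 1 := by omega
          simp_all [eIfBelow, not_lt.mpr h.le, not_lt.mpr h'.le]
    | E =>
      simp only [reduceCtorEq, if_false, List.append_nil, wt]
      rw [← ih]
      by_cases h : height w + -1 = k
      · subst h
        simp [eIfBelow]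
      · simp [h, eIfBelow, show k < height w + -1 ↔ k < height w by omega]

theorem tauLW_eq_reverse_levelLetters {w : List Letter} (hw : height w = 0) (k : ℤ) :
    tauLW (areaVecSq w) k = (levelLetters w k).reverse := by
  have key := levelLetters_append_eIfBelow w k
  rw [hw] at key
  by_cases hk : 0 ≤ k
  · simp_all [tauLW, eIfBelow, not_lt.mpr hk]
  · have hk : k < 0 := not_le.mp hk
    simp only [eIfBelow, if_pos hk, List.singleton_append] at key
    rw [tauLW, if_neg (not_le.mpr hk)]
    split_ifs with hσ
    · simp_all
    · have := congrArg List.dropLast key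
      rw [List.dropLast_concat, List.dropLast_cons_of_ne_nil hσ] at this
      simp [this]

end Levels

theorem negBefore_trans (a b c : ℤ) (hab : negBefore a b) (hbc : negBefore b c) :
    negBefore a c := by
  unfold negBefore at *
  split_ifs at * <;> simp_all <;> omega

theorem negBefore_total (a b : ℤ) : negBefore a b || negBefore b a := by
  unfold negBefore
  split_ifs <;> simp_all <;> omega

def negSweepLevels (n : ℕ) : List ℤ :=
  (List.range n).map (fun j : ℕ => -((j : ℤ) + 1)) ++
    (List.range (n + 1)).map (fun j : ℕ => (n : ℤ) - j)

theorem negSweepLevels_pairwise (n : ℕ) :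
    (negSweepLevels n).Pairwise fun j k => ¬ negBefore k j := by
  simp only [negSweepLevels, List.pairwise_append, List.pairwise_map, List.mem_map, List.mem_range]
  refine ⟨List.pairwise_lt_range.imp fun h => ?_,
    List.pairwise_lt_range.imp_of_mem fun _ hj' h => ?_, ?_⟩
  · unfold negBefore
    split_ifs <;> simp <;> omega
  · have := List.mem_range.mp hj'
    unfold negBefore
    split_ifs <;> simp <;> omega
  · rintro _ ⟨i, hi, rfl⟩ _ ⟨j, hj, rfl⟩
    unfold negBefore
    split_ifs <;> simp <;> omega

theorem mem_negSweepLevels {n : ℕ} {k : ℤ} (h₁ : -(n : ℤ) ≤ k) (h₂ : k ≤ n) :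
    k ∈ negSweepLevels n := by
  simp only [negSweepLevels, List.mem_append, List.mem_map, List.mem_range]
  by_cases hk : k < 0
  · exact Or.inl ⟨(-k - 1).toNat, by omega, by omega⟩
  · exact Or.inr ⟨((n : ℤ) - k).toNat, by omega, by omega⟩

theorem phiLW_eq_flatMap (n : ℕ) (w : List Letter) :
    phiLW n w = (negSweepLevels n).flatMap (tauLW (areaVecSq w)) := by
  simp only [phiLW, List.pure_def, List.bind_eq_flatMap, ← List.map_eq_flatMap]
  simp only [negSweepLevels, List.flatMap_def, List.map_append, List.flatten_append, List.map_map,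
    Function.comp_def]

theorem lvls_mem_Icc (w : List Letter) (a : ℤ) :
    ∀ p ∈ lvls 1 (-1) a w, p.2 ∈ Set.Icc (a - w.count Letter.E) (a + w.count Letter.N) := by
  induction w generalizing a with
  | nil => simp [lvls]
  | cons c w ih =>
    rintro p (hp | ⟨_, hp⟩)
    · cases c <;> simp [wt]; omega
    · have := ih _ p hp
      cases c <;> simp_all [wt] <;> omega

theorem phiLW_eq_sweep_general (n : ℕ) (w : List Letter)
    (hN : w.count Letter.N = n) (hE : w.count Letter.E = n) :
    phiLW n w = sweepNeg 1 (-1) w := by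
  have hw : height w = 0 := by simp [height, hN, hE]
  have hmem : ∀ p ∈ (lvls 1 (-1) 0 w).reverse, p.2 ∈ negSweepLevels n := fun p hp => by
    have := lvls_mem_Icc w 0 p (List.mem_reverse.mp hp)
    simp only [hN, hE, Set.mem_Icc, zero_sub, zero_add] at this
    exact mem_negSweepLevels this.1 this.2
  rw [sweepNeg, List.mergeSort_eq_flatMap_filter negBefore_trans negBefore_total
    (negSweepLevels_pairwise n) hmem, List.map_flatMap, phiLW_eq_flatMap]
  refine List.flatMap_congr fun k _ => ?_
  rw [tauLW_eq_reverse_levelLetters hw, levelLetters, List.filter_reverse, List.map_reverse]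

/-- For all `n > 0` and every lattice path `P` in the `n×n` square,
    `mkwd(φ_LW(P)) = sw⁻_{1,-1}(mkwd(P))`. -/
theorem phiLW_eq_sweep (n : ℕ) (hn : 0 < n) (w : List Letter)
    (hN : w.count Letter.N = n) (hE : w.count Letter.E = n) :
    phiLW n w = sweepNeg 1 (-1) w :=
  phiLW_eq_sweep_general n w hN hE
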